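/- For every k ≥ 1 there exists a bipartite graph G with bipartition (X, Y), |X| = 2k, |Y| = 3k, such that G has a subgraph H covering X with every vertex of X of degree exactly 2 in H and every vertex of Y of degree at most 2 in H, but for some vertex y ∈ Y, the graph G − y has no such subgraph covering X, even though G − y satisfies |N(S)| ≥ ((3k−1)/(2k))|S| for all S ⊆ X. -/

import Mathlib

/-!
Every `x ∈ X` has a single neighbour outside `Y₂`, its partner in `Y₁`, so a subgraph in which
`x` has degree 2 sends an edge from `x` into `Y₂`. Once a vertex `y ∈ Y₂` is deleted, these `2k`
edges must land on the remaining `k - 1` vertices of `Y₂`, each taking at most two: impossible.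
Yet a nonempty `S ⊆ X` still sees its `|S|` partners and the `k - 1` vertices of `Y₂ - y`, and
`2k (|S| + k - 1) ≥ (3k - 1) |S|` because `|S| ≤ 2k`.
-/

open SimpleGraph

section Bipartite

variable {α β : Type*}

def bipartiteOfRel (r : α → β → Prop) : SimpleGraph (α ⊕ β) where
  Adj
    | .inl a, .inr b => r a b
    | .inr b, .inl a => r a b
    | _, _ => False
  symm := ⟨by rintro (a | b) (a' | b') h <;> exact h⟩
  loopless := ⟨by rintro (a | b) h <;> exact h⟩

variable {r r' : α → β → Prop}

@[simp] lemma bipartiteOfRel_adj_inl_inr {a : α} {b : β} :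
    (bipartiteOfRel r).Adj (.inl a) (.inr b) ↔ r a b := Iff.rfl

@[simp] lemma bipartiteOfRel_adj_inr_inl {a : α} {b : β} :
    (bipartiteOfRel r).Adj (.inr b) (.inl a) ↔ r a b := Iff.rfl

@[simp] lemma bipartiteOfRel_not_adj_inl_inl {a a' : α} :
    ¬(bipartiteOfRel r).Adj (.inl a) (.inl a') := id

@[simp] lemma bipartiteOfRel_not_adj_inr_inr {b b' : β} :
    ¬(bipartiteOfRel r).Adj (.inr b) (.inr b') := id

lemma isBipartiteWith_bipartiteOfRel :
    (bipartiteOfRel r).IsBipartiteWith (Set.range Sum.inl) (Set.range Sum.inr) where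
  disjoint := Set.isCompl_range_inl_range_inr.disjoint
  mem_of_adj := by rintro (a | b) (a' | b') h <;> simp_all

lemma bipartiteOfRel_mono (h : r ≤ r') : bipartiteOfRel r ≤ bipartiteOfRel r' := by
  rintro (a | b) (a' | b') hab <;> first | exact absurd hab id | exact h _ _ hab

lemma neighborSet_bipartiteOfRel_inl (a : α) :
    (bipartiteOfRel r).neighborSet (.inl a) = Sum.inr '' {b | r a b} := by
  ext (a' | b) <;> simp

lemma neighborSet_bipartiteOfRel_inr (b : β) :
    (bipartiteOfRel r).neighborSet (.inr b) = Sum.inl '' {a | r a b} := by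
  ext (a | b') <;> simp

lemma ncard_neighborSet_bipartiteOfRel_inl (a : α) :
    ((bipartiteOfRel r).neighborSet (.inl a)).ncard = {b | r a b}.ncard := by
  rw [neighborSet_bipartiteOfRel_inl, Set.ncard_image_of_injective _ Sum.inr_injective]

lemma ncard_neighborSet_bipartiteOfRel_inr (b : β) :
    ((bipartiteOfRel r).neighborSet (.inr b)).ncard = {a | r a b}.ncard := by
  rw [neighborSet_bipartiteOfRel_inr, Set.ncard_image_of_injective _ Sum.inl_injective]

end Bipartite

lemma SimpleGraph.Subgraph.ncard_le_mul_ncard_of_forall_exists_adj {V : Type*} [Finite V]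
    {G : SimpleGraph V} (H : G.Subgraph) {A B : Set V} {d : ℕ}
    (hA : ∀ a ∈ A, ∃ b ∈ B, H.Adj a b) (hB : ∀ b ∈ B, (H.neighborSet b).ncard ≤ d) :
    A.ncard ≤ d * B.ncard := by
  have hcover : A ⊆ ⋃ b ∈ B.toFinite.toFinset, H.neighborSet b := fun a ha ↦ by
    obtain ⟨b, hb, hab⟩ := hA a ha
    exact Set.mem_biUnion (by simpa using hb) hab.symm
  calc A.ncard ≤ (⋃ b ∈ B.toFinite.toFinset, H.neighborSet b).ncard := Set.ncard_le_ncard hcover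
    _ ≤ ∑ b ∈ B.toFinite.toFinset, (H.neighborSet b).ncard := Finset.set_ncard_biUnion_le _ _
    _ ≤ ∑ _b ∈ B.toFinite.toFinset, d := Finset.sum_le_sum fun b hb ↦ hB b (by simpa using hb)
    _ = d * B.ncard := by rw [Finset.sum_const, smul_eq_mul, mul_comm, Set.ncard_eq_toFinset_card]

lemma three_mul_sub_one_mul_le {k s : ℕ} (hs : s ≤ 2 * k) :
    (3 * k - 1) * s ≤ 2 * k * (s + (k - 1)) := by
  rcases k with _ | m
  · simp
  · simp only [Nat.add_sub_cancel]
    have : 3 * (m + 1) - 1 = 3 * m + 2 := by omega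
    rw [this]
    nlinarith

-- `X = α`, `Y₁` is a second copy of `α` with `inl a` matched to `inr (inl a)`, and `Y₂ = β`.
def matchingJoin (α β : Type*) : SimpleGraph (α ⊕ (α ⊕ β)) :=
  bipartiteOfRel fun a ↦ Sum.elim (a = ·) fun _ ↦ True

namespace matchingJoin

variable {α β : Type*}

lemma isBipartiteWith :
    (matchingJoin α β).IsBipartiteWith (Set.range Sum.inl) (Set.range Sum.inr) :=
  isBipartiteWith_bipartiteOfRel

def cover (f : α → β) : (matchingJoin α β).Subgraph :=
  toSubgraph (bipartiteOfRel fun a ↦ Sum.elim (a = ·) (f a = ·))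
    (bipartiteOfRel_mono fun a c _ ↦ by cases c <;> simp_all)

lemma neighborSet_cover (f : α → β) (v : α ⊕ (α ⊕ β)) :
    (cover f).neighborSet v =
      (bipartiteOfRel fun a ↦ Sum.elim (a = ·) (f a = ·)).neighborSet v :=
  rfl

lemma ncard_neighborSet_cover_inl (f : α → β) (a : α) :
    ((cover f).neighborSet (.inl a)).ncard = 2 := by
  have : {c | Sum.elim (a = ·) (f a = ·) c} = {.inl a, .inr (f a)} := by
    ext (_ | _) <;> simp [eq_comm]
  rw [neighborSet_cover, ncard_neighborSet_bipartiteOfRel_inl, this,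
    Set.ncard_pair Sum.inl_ne_inr]

lemma ncard_neighborSet_cover_inr_inl (f : α → β) (a : α) :
    ((cover f).neighborSet (.inr (.inl a))).ncard = 1 := by
  simp [neighborSet_cover, ncard_neighborSet_bipartiteOfRel_inr]

lemma ncard_neighborSet_cover_inr_inr (f : α → β) (b : β) :
    ((cover f).neighborSet (.inr (.inr b))).ncard = (f ⁻¹' {b}).ncard := by
  rw [neighborSet_cover, ncard_neighborSet_bipartiteOfRel_inr]
  rfl

lemma ncard_image_inr_inr_compl [Finite β] (b₀ : β) :
    ((Sum.inr ∘ Sum.inr) '' ({b₀}ᶜ : Set β) : Set (α ⊕ (α ⊕ β))).ncard = Nat.card β - 1 := by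
  rw [Set.ncard_image_of_injective _ (Sum.inr_injective.comp Sum.inr_injective),
    Set.ncard_compl, Set.ncard_singleton]

variable [Finite α] [Finite β]

lemma card_le_of_subgraph (H : (matchingJoin α β).Subgraph) (b₀ : β)
    (hb₀ : .inr (.inr b₀) ∉ H.verts) (hX : ∀ a, (H.neighborSet (.inl a)).ncard = 2)
    (hY : ∀ b, (H.neighborSet (.inr (.inr b))).ncard ≤ 2) :
    Nat.card α ≤ 2 * (Nat.card β - 1) := by
  have hexists : ∀ x ∈ Set.range Sum.inl,
      ∃ w ∈ (Sum.inr ∘ Sum.inr) '' ({b₀}ᶜ : Set β), H.Adj x w := by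
    rintro _ ⟨a, rfl⟩
    obtain ⟨w, hw, hne⟩ :=
      Set.exists_ne_of_one_lt_ncard (by rw [hX a]; norm_num) (Sum.inr (Sum.inl a))
    have hGw := H.adj_sub hw
    rcases w with _ | _ | b
    · simp [matchingJoin] at hGw
    · simp only [matchingJoin, bipartiteOfRel_adj_inl_inr, Sum.elim_inl] at hGw
      exact absurd (hGw ▸ rfl) hne
    · refine ⟨_, ⟨b, ?_, rfl⟩, hw⟩
      rintro rfl
      exact hb₀ (H.edge_vert hw.symm)
  have := H.ncard_le_mul_ncard_of_forall_exists_adj hexists (by rintro _ ⟨b, -, rfl⟩; exact hY b)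
  rwa [Set.ncard_range_of_injective Sum.inl_injective, ncard_image_inr_inr_compl] at this

lemma ncard_add_le_ncard_neighbors {T : Set α} (hT : T.Nonempty) (b₀ : β) :
    T.ncard + (Nat.card β - 1) ≤
      {z | z ≠ (.inr (.inr b₀) : α ⊕ (α ⊕ β)) ∧
        ∃ x ∈ Sum.inl '' T, (matchingJoin α β).Adj x z}.ncard := by
  obtain ⟨a₀, ha₀⟩ := hT
  have hsub : (Sum.inr ∘ Sum.inl) '' T ∪ (Sum.inr ∘ Sum.inr) '' ({b₀}ᶜ : Set β) ⊆
      {z | z ≠ (.inr (.inr b₀) : α ⊕ (α ⊕ β)) ∧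
        ∃ x ∈ Sum.inl '' T, (matchingJoin α β).Adj x z} := by
    rintro _ (⟨a, ha, rfl⟩ | ⟨b, hb, rfl⟩)
    · exact ⟨by simp, _, ⟨a, ha, rfl⟩, by simp [matchingJoin]⟩
    · exact ⟨by simpa using hb, _, ⟨a₀, ha₀, rfl⟩, by simp [matchingJoin]⟩
  have hdisj : Disjoint ((Sum.inr ∘ Sum.inl) '' T)
      ((Sum.inr ∘ Sum.inr) '' ({b₀}ᶜ : Set β) : Set (α ⊕ (α ⊕ β))) := by
    simp [Set.disjoint_left]
  calc T.ncard + (Nat.card β - 1)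
      = ((Sum.inr ∘ Sum.inl) '' T ∪ (Sum.inr ∘ Sum.inr) '' ({b₀}ᶜ : Set β)).ncard := by
        rw [Set.ncard_union_eq hdisj, ncard_image_inr_inr_compl,
          Set.ncard_image_of_injective _ (Sum.inr_injective.comp Sum.inl_injective)]
    _ ≤ _ := Set.ncard_le_ncard hsub

lemma mul_ncard_le_mul_ncard_neighbors (hα : Nat.card α = 2 * Nat.card β) (b₀ : β)
    {S : Set (α ⊕ (α ⊕ β))} (hS : S ⊆ Set.range Sum.inl) :
    (3 * Nat.card β - 1) * S.ncard ≤
      2 * Nat.card β * {z | z ≠ .inr (.inr b₀) ∧ ∃ x ∈ S, (matchingJoin α β).Adj x z}.ncard := by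
  obtain ⟨T, rfl⟩ := Set.subset_range_iff_exists_image_eq.1 hS
  rcases T.eq_empty_or_nonempty with rfl | hT
  · simp
  rw [Set.ncard_image_of_injective _ Sum.inl_injective]
  calc (3 * Nat.card β - 1) * T.ncard ≤ 2 * Nat.card β * (T.ncard + (Nat.card β - 1)) :=
        three_mul_sub_one_mul_le (hα ▸ Set.ncard_le_card T)
    _ ≤ _ := Nat.mul_le_mul_left _ (ncard_add_le_ncard_neighbors hT b₀)

end matchingJoin

theorem stmt_2 (k : ℕ) (hk : 1 ≤ k) :
    ∃ (V : Type) (_ : Fintype V) (G : SimpleGraph V) (X Y : Set V),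
      Disjoint X Y ∧ X ∪ Y = Set.univ ∧
      (∀ a b, G.Adj a b → (a ∈ X ∧ b ∈ Y) ∨ (a ∈ Y ∧ b ∈ X)) ∧
      X.ncard = 2 * k ∧ Y.ncard = 3 * k ∧
      -- G has a good subgraph covering X
      (∃ H : G.Subgraph, X ⊆ H.verts ∧
        (∀ x ∈ X, (H.neighborSet x).ncard = 2) ∧
        (∀ y ∈ Y, (H.neighborSet y).ncard ≤ 2)) ∧
      -- but for some y ∈ Y, G − y has no such subgraph,
      (∃ y ∈ Y,
        (¬ ∃ H : G.Subgraph, y ∉ H.verts ∧ X ⊆ H.verts ∧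
          (∀ x ∈ X, (H.neighborSet x).ncard = 2) ∧
          (∀ z ∈ Y, (H.neighborSet z).ncard ≤ 2)) ∧
        -- even though G − y satisfies the Hall condition with ratio (3k−1)/(2k)
        (∀ S : Set V, S ⊆ X →
          (3 * k - 1) * S.ncard ≤
            2 * k * {z | z ≠ y ∧ ∃ x ∈ S, G.Adj x z}.ncard)) := by
  -- `X = Fin k × Fin 2`, so that `Prod.fst` pairs up `X` over `Y₂ = Fin k`.
  have hbip := matchingJoin.isBipartiteWith (α := Fin k × Fin 2) (β := Fin k)
  refine ⟨_, inferInstance, matchingJoin _ _, _, _, hbip.disjoint, Set.range_inl_union_range_inr,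
    hbip.mem_of_adj, ?_, ?_, ?_, ⟨.inr (.inr ⟨0, hk⟩), ⟨_, rfl⟩, ?_, ?_⟩⟩
  · simp [Set.ncard_range_of_injective Sum.inl_injective, mul_comm]
  · simp [Set.ncard_range_of_injective Sum.inr_injective]
    ring
  · refine ⟨matchingJoin.cover Prod.fst, fun _ _ ↦ Set.mem_univ _, ?_, ?_⟩
    · rintro _ ⟨a, rfl⟩
      exact matchingJoin.ncard_neighborSet_cover_inl _ a
    · rintro _ ⟨a | b, rfl⟩
      · simp [matchingJoin.ncard_neighborSet_cover_inr_inl]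
      · simp [matchingJoin.ncard_neighborSet_cover_inr_inr, Set.preimage_fst_singleton_eq_range,
          Set.ncard_range_of_injective (Prod.mk_right_injective b)]
  · rintro ⟨H, hy, -, hX, hY⟩
    have := matchingJoin.card_le_of_subgraph H _ hy (fun a ↦ hX _ ⟨a, rfl⟩)
      (fun b ↦ hY _ ⟨_, rfl⟩)
    simp only [Nat.card_eq_fintype_card, Fintype.card_prod, Fintype.card_fin] at this
    omega
  · exact fun S hS ↦ by
      simpa using matchingJoin.mul_ncard_le_mul_ncard_neighbors (by simp [mul_comm]) _ hS
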